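/- arXiv:2111.00241 — 2 statements merged into one kernel-verified Lean document; each statement's English description precedes it below -/
import Mathlib

section
/- Let R ⊆ ℤ² be finite and nonempty, let m : R → [0,∞), and let τ : ∂°R → ℝ satisfy |τ_y| ≤ π/5 for all y ∈ ∂°R. Then the function θ ↦ −K_R(θ|τ) attains its maximum over the compact set {θ : R → ℝ : |θ_x| ≤ π/2 for all x ∈ R} at exactly one point ν; this unique maximizer satisfies |ν_x| ≤ π/5 for all x ∈ R, and moreover max_{x∈R} |ν_x| ≤ max_{y∈∂°R} |τ_y|. -/
open Finset

/-- Nearest neighbours of a site of `ℤ²` (Euclidean distance 1). -/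
def nbrs (x : ℤ × ℤ) : Finset (ℤ × ℤ) :=
  {(x.1 + 1, x.2), (x.1 - 1, x.2), (x.1, x.2 + 1), (x.1, x.2 - 1)}

/-- Outer boundary `∂°R = {x ∉ R : dist(x,R) ≤ 1}`. -/
def outerBdry (R : Finset (ℤ × ℤ)) : Finset (ℤ × ℤ) := (R.biUnion nbrs) \ R

/-- `−K_R(θ|τ)`: sum over unordered nearest-neighbour pairs inside `R`
(written as half the sum over ordered pairs), plus the boundary interaction,
plus the mass term `(1/4) Σ m_x cos² θ_x`. -/
noncomputable def negK (R : Finset (ℤ × ℤ)) (m τ θ : ℤ × ℤ → ℝ) : ℝ :=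
  (1 / 2) * ∑ x ∈ R, ∑ y ∈ R ∩ nbrs x, (Real.cos (θ x - θ y) - 1)
    + ∑ x ∈ R, ∑ y ∈ outerBdry R ∩ nbrs x, (Real.cos (θ x - τ y) - 1)
    + (1 / 4) * ∑ x ∈ R, m x * Real.cos (θ x) ^ 2

/-! ### clamp -/

noncomputable def clampTo (M t : ℝ) : ℝ := max (-M) (min M t)

lemma clampTo_le {M : ℝ} (t : ℝ) (hM : 0 ≤ M) : clampTo M t ≤ M :=
  max_le (by linarith) (min_le_left _ _)

lemma neg_le_clampTo (M t : ℝ) : -M ≤ clampTo M t := le_max_left _ _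

lemma abs_clampTo_le {M : ℝ} (t : ℝ) (hM : 0 ≤ M) : |clampTo M t| ≤ M :=
  abs_le.2 ⟨neg_le_clampTo M t, clampTo_le t hM⟩

lemma clampTo_eq {M t : ℝ} (h : |t| ≤ M) : clampTo M t = t := by
  rcases abs_le.1 h with ⟨h1, h2⟩
  unfold clampTo
  rw [min_eq_right h2, max_eq_right h1]

lemma clampTo_lipschitz (M a b : ℝ) : |clampTo M a - clampTo M b| ≤ |a - b| := by
  unfold clampTo
  calc |max (-M) (min M a) - max (-M) (min M b)| ≤ |min M a - min M b| := by
        rw [max_comm (-M) (min M a), max_comm (-M) (min M b)]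
        exact abs_max_sub_max_le_abs _ _ _
    _ ≤ |a - b| := by simpa using abs_min_sub_min_le_max M a M b

lemma abs_clampTo_le_abs {M : ℝ} (t : ℝ) (hM : 0 ≤ M) : |clampTo M t| ≤ |t| := by
  have h := clampTo_lipschitz M t 0
  rw [show clampTo M 0 = 0 from clampTo_eq (by simpa using hM)] at h
  simpa using h

lemma clampTo_of_gt {M t : ℝ} (hM : 0 ≤ M) (h : M < t) : clampTo M t = M := by
  unfold clampTo
  rw [min_eq_left h.le, max_eq_right (by linarith)]

/-! ### cos facts -/

lemma cos_le_cos_abs {a b : ℝ} (h : |b| ≤ |a|) (ha : |a| ≤ Real.pi) :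
    Real.cos a ≤ Real.cos b := by
  rw [← Real.cos_abs a, ← Real.cos_abs b]
  exact Real.cos_le_cos_of_nonneg_of_le_pi (abs_nonneg b) ha h

lemma abs_eq_abs_of_cos_eq {a b : ℝ} (ha : |a| ≤ Real.pi) (hb : |b| ≤ Real.pi)
    (h : Real.cos a = Real.cos b) : |a| = |b| :=
  Real.injOn_cos ⟨abs_nonneg a, ha⟩ ⟨abs_nonneg b, hb⟩
    (by rwa [Real.cos_abs, Real.cos_abs])

lemma cos_mid {a b : ℝ} (ha : |a| ≤ Real.pi / 2) (hb : |b| ≤ Real.pi / 2) :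
    (Real.cos a + Real.cos b) / 2 ≤ Real.cos ((a + b) / 2) := by
  have h := strictConcaveOn_cos_Icc.concaveOn.2 (Set.mem_Icc.2 (abs_le.1 ha))
    (Set.mem_Icc.2 (abs_le.1 hb)) (by norm_num : (0:ℝ) ≤ 1/2) (by norm_num : (0:ℝ) ≤ 1/2)
    (by norm_num)
  simp only [smul_eq_mul] at h
  have e : (1:ℝ)/2 * a + 1/2 * b = (a + b)/2 := by ring
  rw [e] at h
  linarith

lemma cos_mid_eq {a b : ℝ} (ha : |a| ≤ Real.pi / 2) (hb : |b| ≤ Real.pi / 2)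
    (h : (Real.cos a + Real.cos b) / 2 = Real.cos ((a + b) / 2)) : a = b := by
  by_contra hne
  have h' := strictConcaveOn_cos_Icc.2 (Set.mem_Icc.2 (abs_le.1 ha))
    (Set.mem_Icc.2 (abs_le.1 hb)) hne one_half_pos one_half_pos (by norm_num)
  simp only [smul_eq_mul] at h'
  have e : (1:ℝ)/2 * a + 1/2 * b = (a + b)/2 := by ring
  rw [e] at h'
  linarith

lemma cossq_mid {a b : ℝ} (ha : |a| ≤ Real.pi / 4) (hb : |b| ≤ Real.pi / 4) :
    (Real.cos a ^ 2 + Real.cos b ^ 2) / 2 ≤ Real.cos ((a + b) / 2) ^ 2 := by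
  have h2a : |2 * a| ≤ Real.pi / 2 := by rw [abs_mul]; rw [abs_two]; linarith [abs_nonneg a]
  have h2b : |2 * b| ≤ Real.pi / 2 := by rw [abs_mul]; rw [abs_two]; linarith [abs_nonneg b]
  have h := cos_mid h2a h2b
  rw [Real.cos_sq, Real.cos_sq, Real.cos_sq]
  have e : 2 * ((a + b) / 2) = (2 * a + 2 * b) / 2 := by ring
  rw [e]
  linarith

/-! ### reach -/

lemma exists_bdry_nbr (R S : Finset (ℤ × ℤ)) (hSR : S ⊆ R) (hne : S.Nonempty)
    (hcl : ∀ x ∈ S, ∀ y ∈ R, y ∈ nbrs x → y ∈ S) :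
    ∃ x ∈ S, ∃ y ∈ outerBdry R, y ∈ nbrs x := by
  obtain ⟨x, hxS, hmax⟩ := S.exists_max_image (fun p => p.1) hne
  have hnbr : (x.1 + 1, x.2) ∈ nbrs x := by simp [nbrs]
  have hnotR : (x.1 + 1, x.2) ∉ R := by
    intro hy
    have hS := hcl x hxS _ hy hnbr
    have h := hmax _ hS
    simp only at h
    omega
  exact ⟨x, hxS, (x.1 + 1, x.2),
    Finset.mem_sdiff.2 ⟨Finset.mem_biUnion.2 ⟨x, hSR hxS, hnbr⟩, hnotR⟩, hnbr⟩

lemma outerBdry_nonempty {R : Finset (ℤ × ℤ)} (hR : R.Nonempty) :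
    (outerBdry R).Nonempty := by
  obtain ⟨x, _, y, hy, _⟩ := exists_bdry_nbr R R (le_refl _) hR (fun _ _ y hy _ => hy)
  exact ⟨y, hy⟩

lemma negK_le_of_terms (R : Finset (ℤ × ℤ)) (m τ θ θ' : ℤ × ℤ → ℝ)
    (h1 : ∀ x ∈ R, ∀ y ∈ R ∩ nbrs x, Real.cos (θ x - θ y) ≤ Real.cos (θ' x - θ' y))
    (h2 : ∀ x ∈ R, ∀ y ∈ outerBdry R ∩ nbrs x,
      Real.cos (θ x - τ y) ≤ Real.cos (θ' x - τ y))
    (h3 : ∀ x ∈ R, m x * Real.cos (θ x) ^ 2 ≤ m x * Real.cos (θ' x) ^ 2) :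
    negK R m τ θ ≤ negK R m τ θ' := by
  unfold negK
  have hS1 : (∑ x ∈ R, ∑ y ∈ R ∩ nbrs x, (Real.cos (θ x - θ y) - 1))
      ≤ ∑ x ∈ R, ∑ y ∈ R ∩ nbrs x, (Real.cos (θ' x - θ' y) - 1) :=
    Finset.sum_le_sum fun x hx => Finset.sum_le_sum fun y hy => by
      have := h1 x hx y hy; linarith
  have hS2 : (∑ x ∈ R, ∑ y ∈ outerBdry R ∩ nbrs x, (Real.cos (θ x - τ y) - 1))
      ≤ ∑ x ∈ R, ∑ y ∈ outerBdry R ∩ nbrs x, (Real.cos (θ' x - τ y) - 1) :=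
    Finset.sum_le_sum fun x hx => Finset.sum_le_sum fun y hy => by
      have := h2 x hx y hy; linarith
  have hS3 : (∑ x ∈ R, m x * Real.cos (θ x) ^ 2)
      ≤ ∑ x ∈ R, m x * Real.cos (θ' x) ^ 2 := Finset.sum_le_sum h3
  linarith

lemma negK_terms_eq (R : Finset (ℤ × ℤ)) (m τ θ θ' : ℤ × ℤ → ℝ)
    (h1 : ∀ x ∈ R, ∀ y ∈ R ∩ nbrs x, Real.cos (θ x - θ y) ≤ Real.cos (θ' x - θ' y))
    (h2 : ∀ x ∈ R, ∀ y ∈ outerBdry R ∩ nbrs x,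
      Real.cos (θ x - τ y) ≤ Real.cos (θ' x - τ y))
    (h3 : ∀ x ∈ R, m x * Real.cos (θ x) ^ 2 ≤ m x * Real.cos (θ' x) ^ 2)
    (hge : negK R m τ θ' ≤ negK R m τ θ) :
    (∀ x ∈ R, ∀ y ∈ R ∩ nbrs x, Real.cos (θ x - θ y) = Real.cos (θ' x - θ' y)) ∧
    (∀ x ∈ R, ∀ y ∈ outerBdry R ∩ nbrs x,
      Real.cos (θ x - τ y) = Real.cos (θ' x - τ y)) := by
  have k1 : ∀ x ∈ R, (∑ y ∈ R ∩ nbrs x, (Real.cos (θ x - θ y) - 1))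
      ≤ ∑ y ∈ R ∩ nbrs x, (Real.cos (θ' x - θ' y) - 1) := fun x hx =>
    Finset.sum_le_sum fun y hy => by have := h1 x hx y hy; linarith
  have k2 : ∀ x ∈ R, (∑ y ∈ outerBdry R ∩ nbrs x, (Real.cos (θ x - τ y) - 1))
      ≤ ∑ y ∈ outerBdry R ∩ nbrs x, (Real.cos (θ' x - τ y) - 1) := fun x hx =>
    Finset.sum_le_sum fun y hy => by have := h2 x hx y hy; linarith
  have hS1 := Finset.sum_le_sum k1
  have hS2 := Finset.sum_le_sum k2
  have hS3 : (∑ x ∈ R, m x * Real.cos (θ x) ^ 2)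
      ≤ ∑ x ∈ R, m x * Real.cos (θ' x) ^ 2 := Finset.sum_le_sum h3
  unfold negK at hge
  have e1 : (∑ x ∈ R, ∑ y ∈ R ∩ nbrs x, (Real.cos (θ x - θ y) - 1))
      = ∑ x ∈ R, ∑ y ∈ R ∩ nbrs x, (Real.cos (θ' x - θ' y) - 1) := by linarith
  have e2 : (∑ x ∈ R, ∑ y ∈ outerBdry R ∩ nbrs x, (Real.cos (θ x - τ y) - 1))
      = ∑ x ∈ R, ∑ y ∈ outerBdry R ∩ nbrs x, (Real.cos (θ' x - τ y) - 1) := by linarith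
  have t1 := (Finset.sum_eq_sum_iff_of_le k1).1 e1
  have t2 := (Finset.sum_eq_sum_iff_of_le k2).1 e2
  constructor
  · intro x hx y hy
    have := (Finset.sum_eq_sum_iff_of_le
      (fun y hy => by have := h1 x hx y hy; linarith :
        ∀ y ∈ R ∩ nbrs x, Real.cos (θ x - θ y) - 1 ≤ Real.cos (θ' x - θ' y) - 1)).1
      (t1 x hx) y hy
    linarith
  · intro x hx y hy
    have := (Finset.sum_eq_sum_iff_of_le
      (fun y hy => by have := h2 x hx y hy; linarith :
        ∀ y ∈ outerBdry R ∩ nbrs x,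
          Real.cos (θ x - τ y) - 1 ≤ Real.cos (θ' x - τ y) - 1)).1
      (t2 x hx) y hy
    linarith

lemma negK_mid_le (R : Finset (ℤ × ℤ)) (m τ θ ν μ : ℤ × ℤ → ℝ)
    (h1 : ∀ x ∈ R, ∀ y ∈ R ∩ nbrs x,
      (Real.cos (θ x - θ y) + Real.cos (ν x - ν y)) / 2 ≤ Real.cos (μ x - μ y))
    (h2 : ∀ x ∈ R, ∀ y ∈ outerBdry R ∩ nbrs x,
      (Real.cos (θ x - τ y) + Real.cos (ν x - τ y)) / 2 ≤ Real.cos (μ x - τ y))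
    (h3 : ∀ x ∈ R, (m x * Real.cos (θ x) ^ 2 + m x * Real.cos (ν x) ^ 2) / 2
      ≤ m x * Real.cos (μ x) ^ 2) :
    (negK R m τ θ + negK R m τ ν) / 2 ≤ negK R m τ μ := by
  unfold negK
  have hS1 : ((∑ x ∈ R, ∑ y ∈ R ∩ nbrs x, (Real.cos (θ x - θ y) - 1))
        + ∑ x ∈ R, ∑ y ∈ R ∩ nbrs x, (Real.cos (ν x - ν y) - 1)) / 2
      ≤ ∑ x ∈ R, ∑ y ∈ R ∩ nbrs x, (Real.cos (μ x - μ y) - 1) := by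
    rw [← Finset.sum_add_distrib, Finset.sum_div]
    refine Finset.sum_le_sum fun x hx => ?_
    rw [← Finset.sum_add_distrib, Finset.sum_div]
    refine Finset.sum_le_sum fun y hy => ?_
    have := h1 x hx y hy; linarith
  have hS2 : ((∑ x ∈ R, ∑ y ∈ outerBdry R ∩ nbrs x, (Real.cos (θ x - τ y) - 1))
        + ∑ x ∈ R, ∑ y ∈ outerBdry R ∩ nbrs x, (Real.cos (ν x - τ y) - 1)) / 2
      ≤ ∑ x ∈ R, ∑ y ∈ outerBdry R ∩ nbrs x, (Real.cos (μ x - τ y) - 1) := by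
    rw [← Finset.sum_add_distrib, Finset.sum_div]
    refine Finset.sum_le_sum fun x hx => ?_
    rw [← Finset.sum_add_distrib, Finset.sum_div]
    refine Finset.sum_le_sum fun y hy => ?_
    have := h2 x hx y hy; linarith
  have hS3 : ((∑ x ∈ R, m x * Real.cos (θ x) ^ 2)
        + ∑ x ∈ R, m x * Real.cos (ν x) ^ 2) / 2
      ≤ ∑ x ∈ R, m x * Real.cos (μ x) ^ 2 := by
    rw [← Finset.sum_add_distrib, Finset.sum_div]
    exact Finset.sum_le_sum h3
  linarith

lemma negK_mid_eq (R : Finset (ℤ × ℤ)) (m τ θ ν μ : ℤ × ℤ → ℝ)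
    (h1 : ∀ x ∈ R, ∀ y ∈ R ∩ nbrs x,
      (Real.cos (θ x - θ y) + Real.cos (ν x - ν y)) / 2 ≤ Real.cos (μ x - μ y))
    (h2 : ∀ x ∈ R, ∀ y ∈ outerBdry R ∩ nbrs x,
      (Real.cos (θ x - τ y) + Real.cos (ν x - τ y)) / 2 ≤ Real.cos (μ x - τ y))
    (h3 : ∀ x ∈ R, (m x * Real.cos (θ x) ^ 2 + m x * Real.cos (ν x) ^ 2) / 2
      ≤ m x * Real.cos (μ x) ^ 2)
    (hle : negK R m τ μ ≤ (negK R m τ θ + negK R m τ ν) / 2) :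
    (∀ x ∈ R, ∀ y ∈ R ∩ nbrs x,
      (Real.cos (θ x - θ y) + Real.cos (ν x - ν y)) / 2 = Real.cos (μ x - μ y)) ∧
    (∀ x ∈ R, ∀ y ∈ outerBdry R ∩ nbrs x,
      (Real.cos (θ x - τ y) + Real.cos (ν x - τ y)) / 2 = Real.cos (μ x - τ y)) := by
  have k1 : ∀ x ∈ R, (∑ y ∈ R ∩ nbrs x,
        ((Real.cos (θ x - θ y) - 1 + (Real.cos (ν x - ν y) - 1)) / 2))
      ≤ ∑ y ∈ R ∩ nbrs x, (Real.cos (μ x - μ y) - 1) := fun x hx =>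
    Finset.sum_le_sum fun y hy => by have := h1 x hx y hy; linarith
  have k2 : ∀ x ∈ R, (∑ y ∈ outerBdry R ∩ nbrs x,
        ((Real.cos (θ x - τ y) - 1 + (Real.cos (ν x - τ y) - 1)) / 2))
      ≤ ∑ y ∈ outerBdry R ∩ nbrs x, (Real.cos (μ x - τ y) - 1) := fun x hx =>
    Finset.sum_le_sum fun y hy => by have := h2 x hx y hy; linarith
  have hS1 := Finset.sum_le_sum k1
  have hS2 := Finset.sum_le_sum k2
  have hS3 : ((∑ x ∈ R, m x * Real.cos (θ x) ^ 2)
        + ∑ x ∈ R, m x * Real.cos (ν x) ^ 2) / 2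
      ≤ ∑ x ∈ R, m x * Real.cos (μ x) ^ 2 := by
    rw [← Finset.sum_add_distrib, Finset.sum_div]
    exact Finset.sum_le_sum h3
  have r1 : (∑ x ∈ R, ∑ y ∈ R ∩ nbrs x,
        ((Real.cos (θ x - θ y) - 1 + (Real.cos (ν x - ν y) - 1)) / 2))
      = ((∑ x ∈ R, ∑ y ∈ R ∩ nbrs x, (Real.cos (θ x - θ y) - 1))
        + ∑ x ∈ R, ∑ y ∈ R ∩ nbrs x, (Real.cos (ν x - ν y) - 1)) / 2 := by
    rw [← Finset.sum_add_distrib, Finset.sum_div]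
    exact Finset.sum_congr rfl fun x _ => by
      rw [← Finset.sum_add_distrib, Finset.sum_div]
  have r2 : (∑ x ∈ R, ∑ y ∈ outerBdry R ∩ nbrs x,
        ((Real.cos (θ x - τ y) - 1 + (Real.cos (ν x - τ y) - 1)) / 2))
      = ((∑ x ∈ R, ∑ y ∈ outerBdry R ∩ nbrs x, (Real.cos (θ x - τ y) - 1))
        + ∑ x ∈ R, ∑ y ∈ outerBdry R ∩ nbrs x, (Real.cos (ν x - τ y) - 1)) / 2 := by
    rw [← Finset.sum_add_distrib, Finset.sum_div]
    exact Finset.sum_congr rfl fun x _ => by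
      rw [← Finset.sum_add_distrib, Finset.sum_div]
  rw [r1] at hS1
  rw [r2] at hS2
  unfold negK at hle
  have e1 : (∑ x ∈ R, ∑ y ∈ R ∩ nbrs x,
        ((Real.cos (θ x - θ y) - 1 + (Real.cos (ν x - ν y) - 1)) / 2))
      = ∑ x ∈ R, ∑ y ∈ R ∩ nbrs x, (Real.cos (μ x - μ y) - 1) := by
    rw [r1]; linarith
  have e2 : (∑ x ∈ R, ∑ y ∈ outerBdry R ∩ nbrs x,
        ((Real.cos (θ x - τ y) - 1 + (Real.cos (ν x - τ y) - 1)) / 2))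
      = ∑ x ∈ R, ∑ y ∈ outerBdry R ∩ nbrs x, (Real.cos (μ x - τ y) - 1) := by
    rw [r2]; linarith
  have t1 := (Finset.sum_eq_sum_iff_of_le k1).1 e1
  have t2 := (Finset.sum_eq_sum_iff_of_le k2).1 e2
  constructor
  · intro x hx y hy
    have := (Finset.sum_eq_sum_iff_of_le
      (fun y hy => by have := h1 x hx y hy; linarith :
        ∀ y ∈ R ∩ nbrs x, (Real.cos (θ x - θ y) - 1 + (Real.cos (ν x - ν y) - 1)) / 2
          ≤ Real.cos (μ x - μ y) - 1)).1 (t1 x hx) y hy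
    linarith
  · intro x hx y hy
    have := (Finset.sum_eq_sum_iff_of_le
      (fun y hy => by have := h2 x hx y hy; linarith :
        ∀ y ∈ outerBdry R ∩ nbrs x,
          (Real.cos (θ x - τ y) - 1 + (Real.cos (ν x - τ y) - 1)) / 2
          ≤ Real.cos (μ x - τ y) - 1)).1 (t2 x hx) y hy
    linarith

lemma negK_neg (R : Finset (ℤ × ℤ)) (m τ θ : ℤ × ℤ → ℝ) :
    negK R m (fun y => -τ y) (fun x => -θ x) = negK R m τ θ := by
  unfold negK
  have e1 : (∑ x ∈ R, ∑ y ∈ R ∩ nbrs x, (Real.cos (-θ x - -θ y) - 1))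
      = ∑ x ∈ R, ∑ y ∈ R ∩ nbrs x, (Real.cos (θ x - θ y) - 1) :=
    Finset.sum_congr rfl fun x _ => Finset.sum_congr rfl fun y _ => by
      rw [show -θ x - -θ y = -(θ x - θ y) by ring, Real.cos_neg]
  have e2 : (∑ x ∈ R, ∑ y ∈ outerBdry R ∩ nbrs x, (Real.cos (-θ x - -τ y) - 1))
      = ∑ x ∈ R, ∑ y ∈ outerBdry R ∩ nbrs x, (Real.cos (θ x - τ y) - 1) :=
    Finset.sum_congr rfl fun x _ => Finset.sum_congr rfl fun y _ => by
      rw [show -θ x - -τ y = -(θ x - τ y) by ring, Real.cos_neg]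
  have e3 : (∑ x ∈ R, m x * Real.cos (-θ x) ^ 2)
      = ∑ x ∈ R, m x * Real.cos (θ x) ^ 2 :=
    Finset.sum_congr rfl fun x _ => by rw [Real.cos_neg]
  rw [e1, e2, e3]

lemma negK_congr (R : Finset (ℤ × ℤ)) (m τ θ θ' : ℤ × ℤ → ℝ)
    (h : ∀ x ∈ R, θ x = θ' x) : negK R m τ θ = negK R m τ θ' := by
  unfold negK
  have e1 : (∑ x ∈ R, ∑ y ∈ R ∩ nbrs x, (Real.cos (θ x - θ y) - 1))
      = ∑ x ∈ R, ∑ y ∈ R ∩ nbrs x, (Real.cos (θ' x - θ' y) - 1) :=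
    Finset.sum_congr rfl fun x hx => Finset.sum_congr rfl fun y hy => by
      rw [h x hx, h y (Finset.mem_inter.1 hy).1]
  have e2 : (∑ x ∈ R, ∑ y ∈ outerBdry R ∩ nbrs x, (Real.cos (θ x - τ y) - 1))
      = ∑ x ∈ R, ∑ y ∈ outerBdry R ∩ nbrs x, (Real.cos (θ' x - τ y) - 1) :=
    Finset.sum_congr rfl fun x hx => Finset.sum_congr rfl fun y _ => by rw [h x hx]
  have e3 : (∑ x ∈ R, m x * Real.cos (θ x) ^ 2)
      = ∑ x ∈ R, m x * Real.cos (θ' x) ^ 2 :=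
    Finset.sum_congr rfl fun x hx => by rw [h x hx]
  rw [e1, e2, e3]

lemma maximizer_le (R : Finset (ℤ × ℤ)) (m : ℤ × ℤ → ℝ) (hm : ∀ x ∈ R, 0 ≤ m x)
    (τ : ℤ × ℤ → ℝ) (M : ℝ) (hM0 : 0 ≤ M) (hM5 : M ≤ Real.pi / 5)
    (hMτ : ∀ y ∈ outerBdry R, |τ y| ≤ M)
    (θ : ℤ × ℤ → ℝ) (hθ : ∀ x ∈ R, |θ x| ≤ Real.pi / 2)
    (hmax : ∀ θ', (∀ x ∈ R, |θ' x| ≤ Real.pi / 2) → negK R m τ θ' ≤ negK R m τ θ) :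
    ∀ x ∈ R, θ x ≤ M := by
  have hπ := Real.pi_pos
  intro x₀ hx₀
  by_contra hx₀M
  push_neg at hx₀M
  set θ' := fun x => clampTo M (θ x) with hθ'def
  have hθ'M : ∀ x, |θ' x| ≤ M := fun x => abs_clampTo_le _ hM0
  have hθ'bd : ∀ x ∈ R, |θ' x| ≤ Real.pi / 2 := fun x _ => le_trans (hθ'M x) (by linarith)
  -- termwise inequalities
  have h1 : ∀ x ∈ R, ∀ y ∈ R ∩ nbrs x,
      Real.cos (θ x - θ y) ≤ Real.cos (θ' x - θ' y) := by
    intro x hx y hy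
    have hyR := (Finset.mem_inter.1 hy).1
    refine cos_le_cos_abs (clampTo_lipschitz M (θ x) (θ y)) ?_
    have := abs_sub (θ x) (θ y)
    have hx' := hθ x hx; have hy' := hθ y hyR
    linarith
  have h2 : ∀ x ∈ R, ∀ y ∈ outerBdry R ∩ nbrs x,
      Real.cos (θ x - τ y) ≤ Real.cos (θ' x - τ y) := by
    intro x hx y hy
    have hyB := (Finset.mem_inter.1 hy).1
    have hτy := hMτ y hyB
    have hlip := clampTo_lipschitz M (θ x) (τ y)
    rw [clampTo_eq hτy] at hlip
    refine cos_le_cos_abs hlip ?_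
    have := abs_sub (θ x) (τ y)
    have hx' := hθ x hx
    linarith
  have h3 : ∀ x ∈ R, m x * Real.cos (θ x) ^ 2 ≤ m x * Real.cos (θ' x) ^ 2 := by
    intro x hx
    refine mul_le_mul_of_nonneg_left ?_ (hm x hx)
    have habs : |θ' x| ≤ |θ x| := abs_clampTo_le_abs _ hM0
    have hcos : Real.cos (θ x) ≤ Real.cos (θ' x) :=
      cos_le_cos_abs habs (by have := hθ x hx; linarith)
    have hnn : 0 ≤ Real.cos (θ x) :=
      Real.cos_nonneg_of_mem_Icc (Set.mem_Icc.2 (abs_le.1 (by have := hθ x hx; linarith [hθ x hx] : |θ x| ≤ Real.pi / 2)))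
    exact pow_le_pow_left₀ hnn hcos 2
  obtain ⟨eqI, eqB⟩ := negK_terms_eq R m τ θ θ' h1 h2 h3 (hmax θ' hθ'bd)
  -- c is the max of θ on R
  obtain ⟨x₁, hx₁R, hx₁max⟩ := R.exists_max_image θ ⟨x₀, hx₀⟩
  have hc : M < θ x₁ := lt_of_lt_of_le hx₀M (hx₁max x₀ hx₀)
  set S := R.filter (fun x => θ x = θ x₁) with hSdef
  have hSR : S ⊆ R := Finset.filter_subset _ _
  have hSne : S.Nonempty := ⟨x₁, Finset.mem_filter.2 ⟨hx₁R, rfl⟩⟩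
  have hcl : ∀ x ∈ S, ∀ y ∈ R, y ∈ nbrs x → y ∈ S := by
    intro x hxS y hyR hynbr
    obtain ⟨hxR, hxval⟩ := Finset.mem_filter.1 hxS
    have heq := eqI x hxR y (Finset.mem_inter.2 ⟨hyR, hynbr⟩)
    have hbnd1 : |θ x - θ y| ≤ Real.pi := by
      have := abs_sub (θ x) (θ y)
      have h1 := hθ x hxR; have h2 := hθ y hyR; linarith
    have hbnd2 : |θ' x - θ' y| ≤ Real.pi := by
      have := abs_sub (θ' x) (θ' y)
      have h1 := hθ'M x; have h2 := hθ'M y; linarith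
    have habs := abs_eq_abs_of_cos_eq hbnd1 hbnd2 heq
    have hθ'x : θ' x = M := by
      rw [hθ'def]; exact clampTo_of_gt hM0 (hxval ▸ hc)
    have hyle : θ y ≤ θ x₁ := hx₁max y hyR
    have hd : 0 ≤ θ x - θ y := by rw [hxval]; linarith
    have hθ'yle : θ' y ≤ M := clampTo_le _ hM0
    rw [abs_of_nonneg hd, hθ'x, abs_of_nonneg (by linarith : (0:ℝ) ≤ M - θ' y)] at habs
    -- habs : θ x - θ y = M - θ' y
    rw [hxval] at habs
    have hlt : θ' y < θ y := by linarith
    have hyM : M < θ y := by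
      by_contra hcon
      push_neg at hcon
      have : θ y ≤ θ' y := by
        have : min M (θ y) = θ y := min_eq_right hcon
        calc θ y = min M (θ y) := this.symm
          _ ≤ θ' y := le_max_right _ _
      linarith
    have hθ'y : θ' y = M := clampTo_of_gt hM0 hyM
    refine Finset.mem_filter.2 ⟨hyR, ?_⟩
    rw [hθ'y] at habs
    linarith
  obtain ⟨x, hxS, y, hyB, hynbr⟩ := exists_bdry_nbr R S hSR hSne hcl
  obtain ⟨hxR, hxval⟩ := Finset.mem_filter.1 hxS
  have heq := eqB x hxR y (Finset.mem_inter.2 ⟨hyB, hynbr⟩)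
  have hτy := hMτ y hyB
  rcases abs_le.1 hτy with ⟨hτ1, hτ2⟩
  have hθ'x : θ' x = M := by rw [hθ'def]; exact clampTo_of_gt hM0 (hxval ▸ hc)
  have hbnd1 : |θ x - τ y| ≤ Real.pi := by
    have := abs_sub (θ x) (τ y)
    have h1 := hθ x hxR; linarith
  have hbnd2 : |θ' x - τ y| ≤ Real.pi := by
    have := abs_sub (θ' x) (τ y)
    have h1 := hθ'M x; linarith
  have habs := abs_eq_abs_of_cos_eq hbnd1 hbnd2 heq
  rw [hθ'x] at habs
  rw [hxval] at habs
  rw [abs_of_nonneg (by linarith : (0:ℝ) ≤ θ x₁ - τ y),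
    abs_of_nonneg (by linarith : (0:ℝ) ≤ M - τ y)] at habs
  linarith

lemma maximizer_abs_le (R : Finset (ℤ × ℤ)) (m : ℤ × ℤ → ℝ) (hm : ∀ x ∈ R, 0 ≤ m x)
    (τ : ℤ × ℤ → ℝ) (M : ℝ) (hM0 : 0 ≤ M) (hM5 : M ≤ Real.pi / 5)
    (hMτ : ∀ y ∈ outerBdry R, |τ y| ≤ M)
    (θ : ℤ × ℤ → ℝ) (hθ : ∀ x ∈ R, |θ x| ≤ Real.pi / 2)
    (hmax : ∀ θ', (∀ x ∈ R, |θ' x| ≤ Real.pi / 2) → negK R m τ θ' ≤ negK R m τ θ) :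
    ∀ x ∈ R, |θ x| ≤ M := by
  intro x hx
  have h1 := maximizer_le R m hm τ M hM0 hM5 hMτ θ hθ hmax x hx
  have hmax' : ∀ θ', (∀ x ∈ R, |θ' x| ≤ Real.pi / 2) →
      negK R m (fun y => -τ y) θ' ≤ negK R m (fun y => -τ y) (fun x => -θ x) := by
    intro θ' hθ'
    have e : negK R m (fun y => -τ y) θ' = negK R m τ (fun x => -θ' x) := by
      rw [← negK_neg R m τ (fun x => -θ' x)]
      exact negK_congr _ _ _ _ _ (fun x _ => by simp)
    rw [e, negK_neg]
    exact hmax (fun x => -θ' x) (fun x hx => by simpa using hθ' x hx)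
  have h2 := maximizer_le R m hm (fun y => -τ y) M hM0 hM5
    (fun y hy => by simpa using hMτ y hy)
    (fun x => -θ x) (fun x hx => by simpa using hθ x hx) hmax' x hx
  exact abs_le.2 ⟨by linarith, h1⟩

lemma maximizers_eq (R : Finset (ℤ × ℤ)) (m : ℤ × ℤ → ℝ) (hm : ∀ x ∈ R, 0 ≤ m x)
    (τ : ℤ × ℤ → ℝ) (M : ℝ) (hM0 : 0 ≤ M) (hM5 : M ≤ Real.pi / 5)
    (hMτ : ∀ y ∈ outerBdry R, |τ y| ≤ M)
    (θ ν : ℤ × ℤ → ℝ)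
    (hθM : ∀ x ∈ R, |θ x| ≤ M) (hνM : ∀ x ∈ R, |ν x| ≤ M)
    (hmaxθ : ∀ θ', (∀ x ∈ R, |θ' x| ≤ Real.pi / 2) → negK R m τ θ' ≤ negK R m τ θ)
    (hmaxν : ∀ θ', (∀ x ∈ R, |θ' x| ≤ Real.pi / 2) → negK R m τ θ' ≤ negK R m τ ν) :
    ∀ x ∈ R, θ x = ν x := by
  have hπ := Real.pi_pos
  set μ := fun x => (θ x + ν x) / 2 with hμdef
  have hμM : ∀ x ∈ R, |μ x| ≤ M := by
    intro x hx
    rcases abs_le.1 (hθM x hx) with ⟨a1, a2⟩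
    rcases abs_le.1 (hνM x hx) with ⟨b1, b2⟩
    exact abs_le.2 ⟨by simp only [hμdef]; linarith, by simp only [hμdef]; linarith⟩
  have hμbd : ∀ x ∈ R, |μ x| ≤ Real.pi / 2 := fun x hx => le_trans (hμM x hx) (by linarith)
  have hθbd : ∀ x ∈ R, |θ x| ≤ Real.pi / 2 := fun x hx => le_trans (hθM x hx) (by linarith)
  have hνbd : ∀ x ∈ R, |ν x| ≤ Real.pi / 2 := fun x hx => le_trans (hνM x hx) (by linarith)
  have h1 : ∀ x ∈ R, ∀ y ∈ R ∩ nbrs x,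
      (Real.cos (θ x - θ y) + Real.cos (ν x - ν y)) / 2 ≤ Real.cos (μ x - μ y) := by
    intro x hx y hy
    have hyR := (Finset.mem_inter.1 hy).1
    have e : μ x - μ y = ((θ x - θ y) + (ν x - ν y)) / 2 := by
      simp only [hμdef]; ring
    rw [e]
    refine cos_mid ?_ ?_
    · have := abs_sub (θ x) (θ y)
      have a1 := hθM x hx; have a2 := hθM y hyR; linarith
    · have := abs_sub (ν x) (ν y)
      have a1 := hνM x hx; have a2 := hνM y hyR; linarith
  have h2 : ∀ x ∈ R, ∀ y ∈ outerBdry R ∩ nbrs x,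
      (Real.cos (θ x - τ y) + Real.cos (ν x - τ y)) / 2 ≤ Real.cos (μ x - τ y) := by
    intro x hx y hy
    have hyB := (Finset.mem_inter.1 hy).1
    have hτy := hMτ y hyB
    have e : μ x - τ y = ((θ x - τ y) + (ν x - τ y)) / 2 := by
      simp only [hμdef]; ring
    rw [e]
    refine cos_mid ?_ ?_
    · have := abs_sub (θ x) (τ y)
      have a1 := hθM x hx; linarith
    · have := abs_sub (ν x) (τ y)
      have a1 := hνM x hx; linarith
  have h3 : ∀ x ∈ R, (m x * Real.cos (θ x) ^ 2 + m x * Real.cos (ν x) ^ 2) / 2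
      ≤ m x * Real.cos (μ x) ^ 2 := by
    intro x hx
    have hq : (Real.cos (θ x) ^ 2 + Real.cos (ν x) ^ 2) / 2
        ≤ Real.cos ((θ x + ν x) / 2) ^ 2 := by
      refine cossq_mid ?_ ?_
      · have := hθM x hx; linarith
      · have := hνM x hx; linarith
    have hμx : μ x = (θ x + ν x) / 2 := rfl
    rw [hμx]
    have := mul_le_mul_of_nonneg_left hq (hm x hx)
    calc (m x * Real.cos (θ x) ^ 2 + m x * Real.cos (ν x) ^ 2) / 2
        = m x * ((Real.cos (θ x) ^ 2 + Real.cos (ν x) ^ 2) / 2) := by ring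
      _ ≤ m x * Real.cos ((θ x + ν x) / 2) ^ 2 := this
  have hEq : negK R m τ θ = negK R m τ ν :=
    le_antisymm (hmaxν θ hθbd) (hmaxθ ν hνbd)
  have hle : negK R m τ μ ≤ (negK R m τ θ + negK R m τ ν) / 2 := by
    have := hmaxθ μ hμbd; linarith
  obtain ⟨eqI, eqB⟩ := negK_mid_eq R m τ θ ν μ h1 h2 h3 hle
  intro x₂ hx₂
  by_contra hne
  set S := R.filter (fun x => θ x - ν x = θ x₂ - ν x₂) with hSdef
  have hSR : S ⊆ R := Finset.filter_subset _ _
  have hSne : S.Nonempty := ⟨x₂, Finset.mem_filter.2 ⟨hx₂, rfl⟩⟩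
  have hcl : ∀ x ∈ S, ∀ y ∈ R, y ∈ nbrs x → y ∈ S := by
    intro x hxS y hyR hynbr
    obtain ⟨hxR, hxval⟩ := Finset.mem_filter.1 hxS
    have heq := eqI x hxR y (Finset.mem_inter.2 ⟨hyR, hynbr⟩)
    have e : μ x - μ y = ((θ x - θ y) + (ν x - ν y)) / 2 := by
      simp only [hμdef]; ring
    rw [e] at heq
    have hab : θ x - θ y = ν x - ν y := by
      refine cos_mid_eq ?_ ?_ heq
      · have := abs_sub (θ x) (θ y)
        have a1 := hθM x hxR; have a2 := hθM y hyR; linarith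
      · have := abs_sub (ν x) (ν y)
        have a1 := hνM x hxR; have a2 := hνM y hyR; linarith
    refine Finset.mem_filter.2 ⟨hyR, ?_⟩
    rw [← hxval]; linarith
  obtain ⟨x, hxS, y, hyB, hynbr⟩ := exists_bdry_nbr R S hSR hSne hcl
  obtain ⟨hxR, hxval⟩ := Finset.mem_filter.1 hxS
  have heq := eqB x hxR y (Finset.mem_inter.2 ⟨hyB, hynbr⟩)
  have hτy := hMτ y hyB
  have e : μ x - τ y = ((θ x - τ y) + (ν x - τ y)) / 2 := by
    simp only [hμdef]; ring
  rw [e] at heq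
  have hab : θ x - τ y = ν x - τ y := by
    refine cos_mid_eq ?_ ?_ heq
    · have := abs_sub (θ x) (τ y)
      have a1 := hθM x hxR; linarith
    · have := abs_sub (ν x) (τ y)
      have a1 := hνM x hxR; linarith
  apply hne
  have : θ x = ν x := by linarith
  have h0 : θ x₂ - ν x₂ = 0 := by rw [← hxval]; linarith
  linarith

/-- The functional `−K_R(·|τ)` attains its maximum over
`{θ : |θ_x| ≤ π/2 on R}` at exactly one point (as a function on `R`);
the maximizer `ν` satisfies `|ν_x| ≤ π/5` on `R` and
`max_{x∈R} |ν_x| ≤ max_{y∈∂°R} |τ_y|`. -/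
theorem stmt0 (R : Finset (ℤ × ℤ)) (hR : R.Nonempty)
    (m : ℤ × ℤ → ℝ) (hm : ∀ x ∈ R, 0 ≤ m x)
    (τ : ℤ × ℤ → ℝ) (hτ : ∀ y ∈ outerBdry R, |τ y| ≤ Real.pi / 5) :
    ∃ ν : ℤ × ℤ → ℝ,
      (∀ x ∈ R, |ν x| ≤ Real.pi / 2) ∧
      (∀ θ : ℤ × ℤ → ℝ, (∀ x ∈ R, |θ x| ≤ Real.pi / 2) →
        negK R m τ θ ≤ negK R m τ ν) ∧
      (∀ θ : ℤ × ℤ → ℝ, (∀ x ∈ R, |θ x| ≤ Real.pi / 2) →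
        (∀ θ' : ℤ × ℤ → ℝ, (∀ x ∈ R, |θ' x| ≤ Real.pi / 2) →
          negK R m τ θ' ≤ negK R m τ θ) →
        ∀ x ∈ R, θ x = ν x) ∧
      (∀ x ∈ R, |ν x| ≤ Real.pi / 5) ∧
      (∀ x ∈ R, ∃ y ∈ outerBdry R, |ν x| ≤ |τ y|) := by
  have hπ := Real.pi_pos
  -- maximum of |τ| over the (nonempty) outer boundary
  obtain ⟨y₀, hy₀, hy₀max⟩ :=
    (outerBdry R).exists_max_image (fun y => |τ y|) (outerBdry_nonempty hR)
  set M := |τ y₀| with hMdef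
  have hM0 : 0 ≤ M := abs_nonneg _
  have hM5 : M ≤ Real.pi / 5 := hτ y₀ hy₀
  have hMτ : ∀ y ∈ outerBdry R, |τ y| ≤ M := hy₀max
  -- existence of a maximizer via compactness
  set box : Set ((ℤ × ℤ) → ℝ) :=
    Set.pi Set.univ (fun x => if x ∈ R then Set.Icc (-(Real.pi/2)) (Real.pi/2) else {0})
    with hboxdef
  have hcomp : IsCompact box := by
    refine isCompact_univ_pi fun x => ?_
    by_cases hx : x ∈ R
    · simp only [hx, if_true]; exact isCompact_Icc
    · simp only [hx, if_false]; exact isCompact_singleton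
  have hboxne : box.Nonempty := by
    refine ⟨fun _ => 0, fun x _ => ?_⟩
    by_cases hx : x ∈ R
    · simp only [hx, if_true]
      exact Set.mem_Icc.2 ⟨by linarith, by linarith⟩
    · simp only [hx, if_false]; rfl
  have hcont : Continuous (fun θ : (ℤ × ℤ) → ℝ => negK R m τ θ) := by
    unfold negK
    refine Continuous.add (Continuous.add (Continuous.mul continuous_const ?_) ?_)
      (Continuous.mul continuous_const ?_)
    · refine continuous_finset_sum _ fun x _ => continuous_finset_sum _ fun y _ => ?_
      exact (Real.continuous_cos.comp ((continuous_apply x).sub (continuous_apply y))).sub continuous_const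
    · refine continuous_finset_sum _ fun x _ => continuous_finset_sum _ fun y _ => ?_
      exact (Real.continuous_cos.comp ((continuous_apply x).sub continuous_const)).sub continuous_const
    · refine continuous_finset_sum _ fun x _ => ?_
      exact continuous_const.mul ((Real.continuous_cos.comp (continuous_apply x)).pow 2)
  obtain ⟨ρ, hρbox, hρmax⟩ := hcomp.exists_isMaxOn hboxne hcont.continuousOn
  have hρbd : ∀ x ∈ R, |ρ x| ≤ Real.pi / 2 := by
    intro x hx
    have h := hρbox x (Set.mem_univ x)
    simp only [hx, if_true] at h
    exact abs_le.2 (Set.mem_Icc.1 h)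
  have hρmax' : ∀ θ : ℤ × ℤ → ℝ, (∀ x ∈ R, |θ x| ≤ Real.pi / 2) →
      negK R m τ θ ≤ negK R m τ ρ := by
    intro θ hθ
    set θ' : (ℤ × ℤ) → ℝ := fun x => if x ∈ R then θ x else 0 with hθ'def
    have hmem : θ' ∈ box := by
      intro x _
      by_cases hx : x ∈ R
      · simp only [hx, if_true, hθ'def]
        exact Set.mem_Icc.2 (abs_le.1 (hθ x hx))
      · simp only [hx, if_false, hθ'def]; rfl
    have he : negK R m τ θ = negK R m τ θ' :=
      negK_congr _ _ _ _ _ (fun x hx => by simp [hθ'def, hx])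
    rw [he]
    exact hρmax hmem
  -- ρ is bounded by M
  have hρM : ∀ x ∈ R, |ρ x| ≤ M :=
    maximizer_abs_le R m hm τ M hM0 hM5 hMτ ρ hρbd hρmax'
  refine ⟨ρ, hρbd, hρmax', ?_, ?_, ?_⟩
  · intro θ hθbd hθmax
    have hθM : ∀ x ∈ R, |θ x| ≤ M :=
      maximizer_abs_le R m hm τ M hM0 hM5 hMτ θ hθbd hθmax
    exact maximizers_eq R m hm τ M hM0 hM5 hMτ θ ρ hθM hρM hθmax hρmax'
  · intro x hx
    exact le_trans (hρM x hx) hM5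
  · intro x hx
    exact ⟨y₀, hy₀, hρM x hx⟩
end

section
/- Let ℓ ≥ 1 be an integer, let B = {1,…,2ℓ} × {1,…,ℓ} ⊂ ℤ², and let σ : B → S¹ (unit vectors in ℝ²). Suppose (1/(2ℓ²)) Σ_{x∈B} σ_x·e₁ ≥ 1 − ξ with 0 ≤ ξ ≤ 1/100, and that the Dirichlet energy satisfies Σ_{{x,y}⊆B, x∼y} ‖σ_x − σ_y‖² ≤ K with K ≤ 1/3200. Then there exists a row index j ∈ {1,…,ℓ} such that σ_{(i,j)}·e₁ ≥ 9/10 for every i ∈ {1,…,2ℓ}. -/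
open Finset

/-!
Argue by contradiction: suppose every row contains a spin with `σ·e₁ < 9/10`. A row in which all
spins have `σ·e₁ < 19/20` carries a defect `∑ (1 - σ·e₁) ≥ 2ℓ/20`; in any other row the first
component moves by at least `1/20` along the row, which by Cauchy–Schwarz costs horizontal energy
at least `1/(20² · 2ℓ)`. Either way `ℓ ≤ 10 · defect + 800 ℓ² · energy` for each row. Summing over
the `ℓ` rows, the total defect is at most `2ℓ²ξ` by the average-magnetization bound and the total
horizontal energy at most `2K`, so `ℓ² ≤ 20ℓ²ξ + 1600ℓ²K ≤ (1/5 + 1/2) ℓ²`, which is absurd.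
-/

noncomputable def dirichletEnergy (B : Finset (ℤ × ℤ)) (σ : ℤ × ℤ → ℝ × ℝ) : ℝ :=
  (1 / 2) * ∑ x ∈ B, ∑ y ∈ B ∩ nbrs x,
    (((σ x).1 - (σ y).1) ^ 2 + ((σ x).2 - (σ y).2) ^ 2)

lemma sum_Ico_sub_succ (f : ℤ → ℝ) {a b : ℤ} (hab : a ≤ b) :
    ∑ i ∈ Ico a b, (f (i + 1) - f i) = f b - f a := by
  induction b, hab using Int.leInduction with
  | base => simp
  | succ b hab ih =>
    have hIco : Ico a (b + 1) = insert b (Ico a b) := by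
      ext i; simp only [mem_Ico, mem_insert]; omega
    rw [hIco, sum_insert (by simp), ih]
    ring

lemma sq_sub_le_mul_sum_sq_sub_succ (f : ℤ → ℝ) {m n a b : ℤ}
    (ha : a ∈ Icc m n) (hb : b ∈ Icc m n) :
    (f b - f a) ^ 2 ≤ (n - m) * ∑ i ∈ Ico m n, (f (i + 1) - f i) ^ 2 := by
  wlog hab : a ≤ b generalizing a b
  · rw [← neg_sub, neg_sq]; exact this hb ha (by omega)
  rw [mem_Icc] at ha hb
  have hmn : ((#(Ico m n) : ℕ) : ℝ) = n - m := by
    rw [Int.card_Ico, ← Int.cast_natCast, Int.toNat_of_nonneg (by omega)]; push_cast; ring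
  have habs : |f b - f a| ≤ ∑ i ∈ Ico m n, |f (i + 1) - f i| := by
    rw [← sum_Ico_sub_succ f hab]
    refine (abs_sum_le_sum_abs _ _).trans (sum_le_sum_of_subset_of_nonneg ?_ ?_)
    · intro i; simp only [mem_Ico]; omega
    · intros; positivity
  calc (f b - f a) ^ 2 = |f b - f a| ^ 2 := (sq_abs _).symm
    _ ≤ (∑ i ∈ Ico m n, |f (i + 1) - f i|) ^ 2 := by gcongr
    _ ≤ #(Ico m n) * ∑ i ∈ Ico m n, |f (i + 1) - f i| ^ 2 := sq_sum_le_card_mul_sum_sq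
    _ = (n - m) * ∑ i ∈ Ico m n, (f (i + 1) - f i) ^ 2 := by simp only [hmn, sq_abs]

lemma le_sum_one_sub_or_sq_le_mul_sum_sq (f : ℤ → ℝ) {m n b : ℤ} {s t : ℝ}
    (hb : b ∈ Icc m n) (hfb : f b ≤ t) (hts : t ≤ s) :
    (n - m + 1) * (1 - s) ≤ ∑ i ∈ Icc m n, (1 - f i) ∨
      (s - t) ^ 2 ≤ (n - m) * ∑ i ∈ Ico m n, (f (i + 1) - f i) ^ 2 := by
  by_cases hs : ∃ a ∈ Icc m n, s ≤ f a
  · obtain ⟨a, ha, hfa⟩ := hs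
    right
    calc (s - t) ^ 2 ≤ (f b - f a) ^ 2 := by nlinarith
      _ ≤ _ := sq_sub_le_mul_sum_sq_sub_succ f ha hb
  · push Not at hs
    left
    have hmn : ((#(Icc m n) : ℕ) : ℝ) = n - m + 1 := by
      rw [mem_Icc] at hb
      rw [Int.card_Icc, ← Int.cast_natCast, Int.toNat_of_nonneg (by omega)]; push_cast; ring
    calc (n - m + 1) * (1 - s) = ∑ _i ∈ Icc m n, (1 - s) := by
          rw [sum_const, nsmul_eq_mul, hmn]
      _ ≤ ∑ i ∈ Icc m n, (1 - f i) := sum_le_sum fun i hi => by linarith [hs i hi]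

lemma le_mul_sum_one_sub_add_mul_sum_sq (f : ℤ → ℝ) {n b : ℤ}
    (hf : ∀ i ∈ Icc 1 n, f i ≤ 1) (hb : b ∈ Icc 1 n) (hfb : f b < 9 / 10) :
    (n : ℝ) ≤ 20 * ∑ i ∈ Icc 1 n, (1 - f i) +
      400 * n * (n - 1) * ∑ i ∈ Ico 1 n, (f (i + 1) - f i) ^ 2 := by
  have hn : (1 : ℝ) ≤ n := by rw [mem_Icc] at hb; exact_mod_cast hb.1.trans hb.2
  have hdefect : 0 ≤ ∑ i ∈ Icc 1 n, (1 - f i) := sum_nonneg fun i hi => by linarith [hf i hi]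
  have henergy : 0 ≤ ∑ i ∈ Ico 1 n, (f (i + 1) - f i) ^ 2 := by positivity
  rcases le_sum_one_sub_or_sq_le_mul_sum_sq f hb hfb.le
    (by norm_num : (9 : ℝ) / 10 ≤ 19 / 20) with h | h
  · have : 0 ≤ n * (n - 1) * ∑ i ∈ Ico 1 n, (f (i + 1) - f i) ^ 2 :=
      mul_nonneg (mul_nonneg (by linarith) (by linarith)) henergy
    push_cast at h; nlinarith
  · push_cast at h; nlinarith [mul_le_mul_of_nonneg_left h (by linarith : (0 : ℝ) ≤ n)]

lemma sum_sq_sub_fst_le_two_mul_dirichletEnergy (σ : ℤ × ℤ → ℝ × ℝ) (a b c d : ℤ) :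
    ∑ j ∈ Icc c d, ∑ i ∈ Ico a b, ((σ (i + 1, j)).1 - (σ (i, j)).1) ^ 2 ≤
      2 * dirichletEnergy (Icc a b ×ˢ Icc c d) σ := by
  set B := Icc a b ×ˢ Icc c d
  set g : ℤ × ℤ → ℤ × ℤ → ℝ :=
    fun x y => ((σ x).1 - (σ y).1) ^ 2 + ((σ x).2 - (σ y).2) ^ 2
  have hg : ∀ x, 0 ≤ ∑ y ∈ B ∩ nbrs x, g x y := fun x => sum_nonneg fun y _ => by positivity
  have hedge : ∀ i ∈ Ico a b, ∀ j ∈ Icc c d,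
      ((σ (i + 1, j)).1 - (σ (i, j)).1) ^ 2 ≤ ∑ y ∈ B ∩ nbrs (i, j), g (i, j) y := by
    intro i hi j hj
    have hmem : (i + 1, j) ∈ B ∩ nbrs (i, j) := by
      simp only [B, nbrs, mem_inter, mem_product, mem_Icc, mem_insert, mem_singleton]
      simp only [mem_Ico, mem_Icc] at hi hj
      exact ⟨⟨⟨by omega, by omega⟩, hj⟩, by simp⟩
    refine le_trans ?_ (single_le_sum (fun y _ => by positivity) hmem)
    nlinarith [sq_nonneg ((σ (i, j)).2 - (σ (i + 1, j)).2)]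
  calc ∑ j ∈ Icc c d, ∑ i ∈ Ico a b, ((σ (i + 1, j)).1 - (σ (i, j)).1) ^ 2
      ≤ ∑ j ∈ Icc c d, ∑ i ∈ Icc a b, ∑ y ∈ B ∩ nbrs (i, j), g (i, j) y := by
        refine sum_le_sum fun j hj => ?_
        refine (sum_le_sum fun i hi => hedge i hi j hj).trans ?_
        exact sum_le_sum_of_subset_of_nonneg Ico_subset_Icc_self fun x _ _ => hg _
    _ = 2 * dirichletEnergy B σ := by
        rw [dirichletEnergy, sum_product_right]; ring

lemma sum_one_sub_fst_le_of_average_le {l : ℕ} (hl : 1 ≤ l) (σ : ℤ × ℤ → ℝ × ℝ) {ξ : ℝ}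
    (havg : 1 - ξ ≤ (1 / (2 * (l : ℝ) ^ 2)) *
      ∑ x ∈ Icc (1 : ℤ) (2 * l) ×ˢ Icc (1 : ℤ) l, (σ x).1) :
    ∑ x ∈ Icc (1 : ℤ) (2 * l) ×ˢ Icc (1 : ℤ) l, (1 - (σ x).1) ≤ 2 * l ^ 2 * ξ := by
  have hcard : ((#(Icc (1 : ℤ) (2 * l) ×ˢ Icc (1 : ℤ) l) : ℕ) : ℝ) = 2 * l ^ 2 := by
    have h2l : (2 * (l : ℤ)).toNat = 2 * l := by omega
    simp only [card_product, Int.card_Icc, h2l, add_sub_cancel_right, Int.toNat_natCast]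
    push_cast; ring
  have hl0 : (0 : ℝ) < l := by exact_mod_cast hl
  rw [sum_sub_distrib, sum_const, nsmul_eq_mul, mul_one, hcard]
  rw [one_div, ← div_eq_inv_mul, le_div_iff₀ (by positivity)] at havg
  linarith

theorem stmt4_general (l : ℕ) (hl : 1 ≤ l) (σ : ℤ × ℤ → ℝ × ℝ) (ξ K : ℝ)
    (hunit : ∀ x ∈ Finset.Icc (1 : ℤ) (2 * l) ×ˢ Finset.Icc (1 : ℤ) l,
      (σ x).1 ^ 2 + (σ x).2 ^ 2 = 1)
    (hξ1 : ξ ≤ 1 / 100)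
    (havg : 1 - ξ ≤ (1 / (2 * (l : ℝ) ^ 2)) *
      ∑ x ∈ Finset.Icc (1 : ℤ) (2 * l) ×ˢ Finset.Icc (1 : ℤ) l, (σ x).1)
    (hK : K ≤ 1 / 3200)
    (hE : (1 / 2) * ∑ x ∈ Finset.Icc (1 : ℤ) (2 * l) ×ˢ Finset.Icc (1 : ℤ) l,
        ∑ y ∈ (Finset.Icc (1 : ℤ) (2 * l) ×ˢ Finset.Icc (1 : ℤ) l) ∩ nbrs x,
          (((σ x).1 - (σ y).1) ^ 2 + ((σ x).2 - (σ y).2) ^ 2) ≤ K) :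
    ∃ j ∈ Finset.Icc (1 : ℤ) (l : ℤ),
      ∀ i ∈ Finset.Icc (1 : ℤ) (2 * l : ℤ), (9 : ℝ) / 10 ≤ (σ (i, j)).1 := by
  by_contra! hrow
  set defect : ℤ → ℝ := fun j => ∑ i ∈ Icc (1 : ℤ) (2 * l), (1 - (σ (i, j)).1)
  set energy : ℤ → ℝ := fun j => ∑ i ∈ Ico (1 : ℤ) (2 * l), ((σ (i + 1, j)).1 - (σ (i, j)).1) ^ 2
  have hl0 : (1 : ℝ) ≤ l := by exact_mod_cast hl
  have hrow_bound : ∀ j ∈ Icc (1 : ℤ) l, (l : ℝ) ≤ 10 * defect j + 800 * l ^ 2 * energy j := by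
    intro j hj
    obtain ⟨b, hb, hσb⟩ := hrow j hj
    have hfst : ∀ i ∈ Icc (1 : ℤ) (2 * l), (σ (i, j)).1 ≤ 1 := fun i hi => by
      nlinarith [hunit (i, j) (mem_product.2 ⟨hi, hj⟩), sq_nonneg (σ (i, j)).2]
    have h := le_mul_sum_one_sub_add_mul_sum_sq (fun i => (σ (i, j)).1) hfst hb hσb
    have henergy : 0 ≤ energy j := by positivity
    push_cast at h
    nlinarith
  have hdefect_total : ∑ j ∈ Icc (1 : ℤ) l, defect j ≤ 2 * l ^ 2 * ξ := by
    simpa only [sum_product_right] using sum_one_sub_fst_le_of_average_le hl σ havg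
  have henergy_total : ∑ j ∈ Icc (1 : ℤ) l, energy j ≤ 2 * K :=
    (sum_sq_sub_fst_le_two_mul_dirichletEnergy σ 1 (2 * l) 1 l).trans (by
      rw [dirichletEnergy]; linarith)
  have hsum := sum_le_sum hrow_bound
  rw [sum_const, Int.card_Icc, sum_add_distrib, ← mul_sum, ← mul_sum] at hsum
  simp only [add_sub_cancel_right, Int.toNat_natCast, nsmul_eq_mul] at hsum
  nlinarith [mul_le_mul_of_nonneg_left hξ1 (by positivity : (0 : ℝ) ≤ l ^ 2),
    mul_le_mul_of_nonneg_left hK (by positivity : (0 : ℝ) ≤ l ^ 2)]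

/-- In a `2ℓ × ℓ` rectangle of unit spins with average magnetization close to
`e₁` and small Dirichlet energy, there is a full row of spins pointwise well
aligned with `e₁`. -/
theorem stmt4 (l : ℕ) (hl : 1 ≤ l) (σ : ℤ × ℤ → ℝ × ℝ) (ξ K : ℝ)
    (hunit : ∀ x ∈ Finset.Icc (1 : ℤ) (2 * l) ×ˢ Finset.Icc (1 : ℤ) l,
      (σ x).1 ^ 2 + (σ x).2 ^ 2 = 1)
    (hξ0 : 0 ≤ ξ) (hξ1 : ξ ≤ 1 / 100)
    (havg : 1 - ξ ≤ (1 / (2 * (l : ℝ) ^ 2)) *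
      ∑ x ∈ Finset.Icc (1 : ℤ) (2 * l) ×ˢ Finset.Icc (1 : ℤ) l, (σ x).1)
    (hK : K ≤ 1 / 3200)
    (hE : (1 / 2) * ∑ x ∈ Finset.Icc (1 : ℤ) (2 * l) ×ˢ Finset.Icc (1 : ℤ) l,
        ∑ y ∈ (Finset.Icc (1 : ℤ) (2 * l) ×ˢ Finset.Icc (1 : ℤ) l) ∩ nbrs x,
          (((σ x).1 - (σ y).1) ^ 2 + ((σ x).2 - (σ y).2) ^ 2) ≤ K) :
    ∃ j ∈ Finset.Icc (1 : ℤ) (l : ℤ),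
      ∀ i ∈ Finset.Icc (1 : ℤ) (2 * l : ℤ), (9 : ℝ) / 10 ≤ (σ (i, j)).1 :=
  stmt4_general l hl σ ξ K hunit hξ1 havg hK hE
end
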